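/- Let Q be a symmetric n×n real matrix, d ∈ ℝⁿ, A ∈ ℝ^{m×n}, b ∈ ℝᵐ. Suppose x̄ ∈ F is a nondegenerate KKT point of the QP: there exists λ̄ ∈ ℝᵐ with λ̄ ≥ 0, Qx̄ + d = −Aᵀλ̄, (Ax̄ − b)ᵀλ̄ = 0, and rank(A_{I_{x̄}}) = rank(A_{J_λ̄}) = |J_λ̄|. If moreover pᵀQp > 0 for every nonzero p ∈ ℝⁿ with a_iᵀp = 0 for all i ∈ I_{x̄}, then x̄ is a locally unique solution of the QP, i.e. there exists ε > 0 such that Φ(x̄) < Φ(x) for all x ∈ F with ‖x − x̄‖ < ε and x ≠ x̄. -/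

import Mathlib

/-!
Writing `x = x̄ + p`, symmetry of `Q` and stationarity give `Φ(x) - Φ(x̄) = pᵀQp - 2 λ̄ᵀAp`.
Every feasible `p` lies in the cone `A_{I_x̄} p ≤ 0`, on which the linear term `-2 λ̄ᵀAp` is
nonnegative. Where it vanishes, `A_{J_λ̄} p = 0`; the rank condition makes every row indexed by
`I_x̄` a combination of the rows indexed by `J_λ̄`, so `A_{I_x̄} p = 0` and the quadratic term is
positive. Hence the larger of the two terms is at least some `c > 0` on the compact unit slice of
the cone, and for small `‖p‖ = t` either the linear term (of order `t`) or the quadratic term (of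
order `t²`) dominates.
-/

open Matrix

/-- The objective `Φ(x) = xᵀQx + 2dᵀx`. -/
noncomputable def Phi {n : ℕ} (Q : Matrix (Fin n) (Fin n) ℝ) (d : Fin n → ℝ)
    (x : Fin n → ℝ) : ℝ :=
  x ⬝ᵥ (Q *ᵥ x) + 2 * (d ⬝ᵥ x)

open Module Submodule

theorem Submodule.span_image_eq_of_finrank_eq_ncard {K V ι : Type*} [Field K]
    [AddCommGroup V] [Module K V] [Finite ι] {v : ι → V} {I J : Set ι} (hJI : J ⊆ I)
    (hJ : LinearIndependent K (fun i : J => v i))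
    (hrank : finrank K (span K (v '' I)) = J.ncard) :
    span K (v '' J) = span K (v '' I) := by
  have : Fintype J := Fintype.ofFinite J
  have : FiniteDimensional K (span K (v '' I)) :=
    FiniteDimensional.span_of_finite K (Set.toFinite _)
  refine eq_of_le_of_finrank_eq (span_mono (Set.image_mono hJI)) ?_
  rw [hrank, Set.image_eq_range, finrank_span_eq_card hJ, ← Nat.card_coe_set_eq,
    Nat.card_eq_fintype_card]

theorem LinearMap.apply_eq_zero_of_finrank_span_eq_ncard {K V W ι : Type*} [Field K]
    [AddCommGroup V] [Module K V] [AddCommGroup W] [Module K W] [Finite ι] {v : ι → V}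
    {I J : Set ι} (hJI : J ⊆ I) (hJ : LinearIndependent K (fun i : J => v i))
    (hrank : finrank K (span K (v '' I)) = J.ncard) (f : V →ₗ[K] W)
    (hf : ∀ i ∈ J, f (v i) = 0) : ∀ i ∈ I, f (v i) = 0 := by
  have hker : span K (v '' I) ≤ LinearMap.ker f := by
    rw [← span_image_eq_of_finrank_eq_ncard hJI hJ hrank, span_le]
    rintro _ ⟨i, hi, rfl⟩
    exact hf i hi
  exact fun i hi => hker (subset_span (Set.mem_image_of_mem v hi))

theorem Matrix.eq_zero_of_dotProduct_eq_zero_of_mul_nonpos {ι : Type*} [Fintype ι]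
    {u w : ι → ℝ} (h : ∀ i, u i * w i ≤ 0) (huw : u ⬝ᵥ w = 0) {i : ι} (hi : 0 < w i) :
    u i = 0 :=
  (mul_eq_zero.1 ((Finset.sum_eq_zero_iff_of_nonpos fun j _ => h j).1 huw i
    (Finset.mem_univ i))).resolve_right hi.ne'

theorem exists_forall_pos_add_of_cone {E : Type*} [NormedAddCommGroup E] [NormedSpace ℝ E]
    [ProperSpace E] {K : Set E} (hK : IsClosed K)
    (hKsmul : ∀ t : ℝ, 0 < t → ∀ p ∈ K, t • p ∈ K) {q ℓ : E → ℝ} (hq : Continuous q)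
    (hℓ : Continuous ℓ) (hq_smul : ∀ (t : ℝ) p, q (t • p) = t ^ 2 * q p)
    (hℓ_smul : ∀ (t : ℝ) p, ℓ (t • p) = t * ℓ p)
    (hℓK : ∀ p ∈ K, 0 ≤ ℓ p) (hqK : ∀ p ∈ K, p ≠ 0 → ℓ p = 0 → 0 < q p) :
    ∃ ε > 0, ∀ p ∈ K, p ≠ 0 → ‖p‖ < ε → 0 < q p + ℓ p := by
  set S := Metric.sphere (0 : E) 1 ∩ K
  have hS : IsCompact S := (isCompact_sphere 0 1).inter_right hK
  have hmax : ∀ u ∈ S, 0 < max (q u) (ℓ u) := by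
    rintro u ⟨hu1, huK⟩
    have hu0 : u ≠ 0 := ne_zero_of_mem_unit_sphere ⟨u, hu1⟩
    rcases (hℓK u huK).eq_or_lt with h | h
    · exact lt_max_of_lt_left (hqK u huK hu0 h.symm)
    · exact lt_max_of_lt_right h
  obtain ⟨c, hc, hcS⟩ := hS.exists_forall_le' (hq.max hℓ).continuousOn hmax
  obtain ⟨M, hM⟩ := hS.exists_bound_of_continuousOn hq.continuousOn
  refine ⟨c / (|M| + 1), by positivity, fun p hpK hp0 hpε => ?_⟩
  set t := ‖p‖
  have ht : 0 < t := norm_pos_iff.2 hp0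
  obtain ⟨u, huS, hpu⟩ : ∃ u ∈ S, p = t • u :=
    ⟨t⁻¹ • p, ⟨by rw [mem_sphere_zero_iff_norm, norm_smul, norm_inv, norm_norm,
      inv_mul_cancel₀ ht.ne'], hKsmul _ (inv_pos.2 ht) p hpK⟩, by simp [smul_smul, ht.ne']⟩
  have htc : t * (|M| + 1) < c := (lt_div_iff₀ (by positivity)).1 hpε
  have hqu : -|M| ≤ q u := by
    have : |q u| ≤ M := by simpa using hM u huS
    linarith [neg_abs_le (q u), le_abs_self M]
  have key : 0 < t * q u + ℓ u := by
    have hℓu := hℓK u huS.2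
    rcases le_max_iff.1 (hcS u huS) with h | h
    · nlinarith
    · nlinarith
  calc 0 < t * (t * q u + ℓ u) := mul_pos ht key
    _ = q (t • u) + ℓ (t • u) := by rw [hq_smul, hℓ_smul]; ring
    _ = q p + ℓ p := by rw [← hpu]

section QuadraticProgram

variable {ι κ : Type*} [Fintype κ] (A : Matrix ι κ ℝ)

def feasibleCone (I : Set ι) : Set (κ → ℝ) := {p | ∀ i ∈ I, (A *ᵥ p) i ≤ 0}

theorem isClosed_feasibleCone (I : Set ι) : IsClosed (feasibleCone A I) := by
  simp only [feasibleCone, Set.ofPred_forall]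
  exact isClosed_biInter fun i _ => isClosed_le (by fun_prop) continuous_const

variable {A}

theorem smul_mem_feasibleCone {I : Set ι} {p : κ → ℝ} {t : ℝ} (ht : 0 ≤ t)
    (hp : p ∈ feasibleCone A I) : t • p ∈ feasibleCone A I := fun i hi => by
  rw [mulVec_smul, Pi.smul_apply, smul_eq_mul]
  exact mul_nonpos_of_nonneg_of_nonpos ht (hp i hi)

theorem sub_mem_feasibleCone {b : ι → ℝ} {x xbar : κ → ℝ} (hx : A *ᵥ x ≤ b) :
    x - xbar ∈ feasibleCone A {i | (A *ᵥ xbar) i = b i} := fun i hi => by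
  rw [mulVec_sub, Pi.sub_apply, hi]
  linarith [hx i]

theorem mulVec_apply_eq_of_complementary_slackness [Fintype ι] {b lam : ι → ℝ} {x : κ → ℝ}
    (hfeas : A *ᵥ x ≤ b) (hlam : 0 ≤ lam) (hcs : (A *ᵥ x - b) ⬝ᵥ lam = 0) {i : ι}
    (hi : 0 < lam i) : (A *ᵥ x) i = b i :=
  sub_eq_zero.1 <| eq_zero_of_dotProduct_eq_zero_of_mul_nonpos
    (fun j => mul_nonpos_of_nonpos_of_nonneg (sub_nonpos.2 (hfeas j)) (hlam j)) hcs hi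

theorem mulVec_apply_mul_nonpos {I : Set ι} {lam : ι → ℝ} {p : κ → ℝ} (hlam : 0 ≤ lam)
    (hJI : {i | 0 < lam i} ⊆ I) (hp : p ∈ feasibleCone A I) (i : ι) :
    (A *ᵥ p) i * lam i ≤ 0 := by
  rcases (hlam i).eq_or_lt with h | h
  · rw [← h, Pi.zero_apply, mul_zero]
  · exact mul_nonpos_of_nonpos_of_nonneg (hp i (hJI h)) h.le

theorem mulVec_dotProduct_nonpos [Fintype ι] {I : Set ι} {lam : ι → ℝ} {p : κ → ℝ}
    (hlam : 0 ≤ lam) (hJI : {i | 0 < lam i} ⊆ I) (hp : p ∈ feasibleCone A I) :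
    (A *ᵥ p) ⬝ᵥ lam ≤ 0 :=
  Finset.sum_nonpos fun i _ => mulVec_apply_mul_nonpos hlam hJI hp i

theorem mulVec_apply_eq_zero_of_dotProduct_eq_zero [Fintype ι] {I : Set ι} {lam : ι → ℝ}
    {p : κ → ℝ} (hlam : 0 ≤ lam) (hJI : {i | 0 < lam i} ⊆ I)
    (hrankI : finrank ℝ (span ℝ ((fun i => A i) '' I)) = {i | 0 < lam i}.ncard)
    (hrankJ : LinearIndependent ℝ (fun i : {i | 0 < lam i} => A i))
    (hp : p ∈ feasibleCone A I) (h : (A *ᵥ p) ⬝ᵥ lam = 0) : ∀ i ∈ I, (A *ᵥ p) i = 0 :=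
  LinearMap.apply_eq_zero_of_finrank_span_eq_ncard hJI hrankJ hrankI
    ((dotProductBilin ℝ ℝ).flip p) fun _ hi =>
      eq_zero_of_dotProduct_eq_zero_of_mul_nonpos (mulVec_apply_mul_nonpos hlam hJI hp) h hi

end QuadraticProgram

theorem Phi_add {n : ℕ} {Q : Matrix (Fin n) (Fin n) ℝ} (hQ : Q.IsSymm) (d x p : Fin n → ℝ) :
    Phi Q d (x + p) = Phi Q d x + p ⬝ᵥ (Q *ᵥ p) + 2 * (p ⬝ᵥ (Q *ᵥ x + d)) := by
  have hsymm : x ⬝ᵥ (Q *ᵥ p) = p ⬝ᵥ (Q *ᵥ x) := by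
    rw [dotProduct_mulVec, ← vecMul_transpose, hQ.eq, dotProduct_comm]
  simp only [Phi, mulVec_add, dotProduct_add, add_dotProduct]
  linarith [dotProduct_comm d p]

/-- Remark `rem:KKT2ndlocal`. A nondegenerate KKT point `x̄`
(`rank(A_{I_x̄}) = rank(A_{J_λ̄}) = |J_λ̄|`, encoded by: the rows of `A` indexed by
`J_λ̄` are linearly independent and the span of the rows indexed by `I_x̄` has
dimension `|J_λ̄|`) at which `Q` is positive definite on the null space of the
active constraints is a locally unique solution of the QP. -/
theorem nondegenerate_second_order_kkt_is_locally_unique {n m : ℕ}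
    (Q : Matrix (Fin n) (Fin n) ℝ) (hQ : Q.IsSymm)
    (d : Fin n → ℝ) (A : Matrix (Fin m) (Fin n) ℝ) (b : Fin m → ℝ)
    (xbar : Fin n → ℝ) (hfeas : A *ᵥ xbar ≤ b)
    (lam : Fin m → ℝ) (hlam : 0 ≤ lam)
    (hstat : Q *ᵥ xbar + d = -(Aᵀ *ᵥ lam))
    (hcs : (A *ᵥ xbar - b) ⬝ᵥ lam = 0)
    (hrankI : Module.finrank ℝ
        (Submodule.span ℝ ((fun i => A i) '' {i : Fin m | (A *ᵥ xbar) i = b i})) =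
      {i : Fin m | 0 < lam i}.ncard)
    (hrankJ : LinearIndependent ℝ (fun i : {i : Fin m | 0 < lam i} => A i))
    (hpd : ∀ p : Fin n → ℝ, p ≠ 0 →
      (∀ i : Fin m, (A *ᵥ xbar) i = b i → (A *ᵥ p) i = 0) → 0 < p ⬝ᵥ (Q *ᵥ p)) :
    ∃ ε : ℝ, 0 < ε ∧ ∀ x : Fin n → ℝ, A *ᵥ x ≤ b → ‖x - xbar‖ < ε → x ≠ xbar →
      Phi Q d xbar < Phi Q d x := by
  have hJI : {i | 0 < lam i} ⊆ {i | (A *ᵥ xbar) i = b i} := fun _ hi =>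
    mulVec_apply_eq_of_complementary_slackness hfeas hlam hcs hi
  obtain ⟨ε, hε, hpos⟩ := exists_forall_pos_add_of_cone (isClosed_feasibleCone A _)
    (fun t ht p hp => smul_mem_feasibleCone ht.le hp)
    (q := fun p => p ⬝ᵥ (Q *ᵥ p)) (ℓ := fun p => -2 * ((A *ᵥ p) ⬝ᵥ lam))
    (by fun_prop) (by fun_prop)
    (fun t p => by
      simp only [mulVec_smul, dotProduct_smul, smul_dotProduct, smul_eq_mul]; ring)
    (fun t p => by simp only [mulVec_smul, smul_dotProduct, smul_eq_mul]; ring)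
    (fun p hp => by linarith [mulVec_dotProduct_nonpos hlam hJI hp])
    (fun p hp hp0 hℓ => hpd p hp0 <| mulVec_apply_eq_zero_of_dotProduct_eq_zero hlam hJI
      hrankI hrankJ hp (by linarith))
  refine ⟨ε, hε, fun x hx hxε hne => ?_⟩
  have hΦ := Phi_add hQ d xbar (x - xbar)
  rw [add_sub_cancel, hstat, dotProduct_neg, dotProduct_mulVec _ Aᵀ, vecMul_transpose] at hΦ
  linarith [hpos (x - xbar) (sub_mem_feasibleCone hx) (sub_ne_zero.2 hne) hxε]
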